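/- Every normalized block sequence (y_n) of (e_i) dominates (e_n) with constant 1: for all finitely supported real scalars (α_i), ‖Σ_i α_i y_i‖ ≥ ‖Σ_i α_i e_i‖. -/

import Mathlib

abbrev c00 : Type := ℕ →₀ ℝ

noncomputable def flog (x : ℝ) : ℝ := Real.logb 2 (x + 1)

noncomputable def supNorm (x : c00) : ℝ := ⨆ i, |x i|

def proj (E : Finset ℕ) (x : c00) : c00 := x.filter (· ∈ E)

def FLt (A B : Finset ℕ) : Prop := ∀ a ∈ A, ∀ b ∈ B, a < b

def IsNormC00 (N : c00 → ℝ) : Prop :=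
  (∀ x, N x = 0 ↔ x = 0) ∧ (∀ x y, N (x + y) ≤ N x + N y) ∧
    ∀ (a : ℝ) (x : c00), N (a • x) = |a| * N x

def schSet (N : c00 → ℝ) (x : c00) : Set ℝ :=
  {s | ∃ n : ℕ, 2 ≤ n ∧ ∃ E : Fin n → Finset ℕ,
    (∀ i j : Fin n, i < j → FLt (E i) (E j)) ∧
    s = (flog n)⁻¹ * ∑ i, N (proj (E i) x)}

def IsSchlumprechtNorm (N : c00 → ℝ) : Prop :=
  IsNormC00 N ∧ ∀ x : c00, IsLUB (insert (supNorm x) (schSet N x)) (N x)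

def IsBlockSeq (x : ℕ → c00) : Prop :=
  (∀ n, x n ≠ 0) ∧ ∀ n, ∀ i ∈ (x n).support, ∀ j ∈ (x (n+1)).support, i < j

def SeqEquiv (N : c00 → ℝ) (u v : ℕ → c00) : Prop :=
  ∃ c : ℝ, 1 ≤ c ∧ ∀ a : ℕ →₀ ℝ,
    (1 / c) * N (a.sum fun i t => t • u i) ≤ N (a.sum fun i t => t • v i) ∧
    N (a.sum fun i t => t • v i) ≤ c * N (a.sum fun i t => t • u i)

/-!
Induct on the support of `a` and write `Y = Σ aᵢ yᵢ`. Coordinate projections are contractive and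
the `yᵢ` have disjoint supports, so `|aᵢ| = N (aᵢ yᵢ) ≤ N Y`. In a Schlumprecht sum
`f(n)⁻¹ Σ N (Eᵢ a)` either one `Eᵢ` carries the whole support of `a`, and the sum is at most
`N a / f(2)`, harmless for the supremum since `f(2) > 1`; or every `Eᵢ a` has smaller support,
and by induction `N (Eᵢ a) ≤ N (Fᵢ Y)`, where `Fᵢ` is the union of the supports of the `yₖ`
with `k ∈ Eᵢ`; the `Fᵢ` are again successive, so the sum is at most `N Y`.
-/

open Finsupp Function

section Proj

@[simp] lemma proj_apply (E : Finset ℕ) (x : c00) (i : ℕ) :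
    proj E x i = if i ∈ E then x i else 0 := rfl

lemma support_proj (E : Finset ℕ) (x : c00) : (proj E x).support = x.support.filter (· ∈ E) :=
  rfl

lemma proj_zero (E : Finset ℕ) : proj E 0 = 0 :=
  filter_zero _

lemma proj_add (E : Finset ℕ) (x y : c00) : proj E (x + y) = proj E x + proj E y :=
  filter_add

lemma proj_smul (E : Finset ℕ) (t : ℝ) (x : c00) : proj E (t • x) = t • proj E x :=
  filter_smul

lemma proj_proj (E F : Finset ℕ) (x : c00) : proj E (proj F x) = proj (E ∩ F) x := by
  ext i
  simp only [proj_apply, Finset.mem_inter, ite_and]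

lemma proj_eq_self {E : Finset ℕ} {x : c00} (h : x.support ⊆ E) : proj E x = x :=
  (filter_eq_self_iff _ _).2 fun _ hi => h (mem_support_iff.2 hi)

lemma proj_eq_zero {E : Finset ℕ} {x : c00} (h : Disjoint x.support E) : proj E x = 0 :=
  (filter_eq_zero_iff _ _).2 fun _ hi => notMem_support_iff.1 (Finset.disjoint_right.1 h hi)

lemma proj_singleton (i : ℕ) (x : c00) : proj {i} x = single i (x i) := by
  ext j
  by_cases h : j = i <;> simp [h]

lemma support_proj_ssubset {E : Finset ℕ} {x : c00} (h : ¬ x.support ⊆ E) :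
    (proj E x).support ⊂ x.support := by
  rw [support_proj, Finset.filter_ssubset]
  simpa [Finset.not_subset] using h

end Proj

lemma abs_apply_le_supNorm (x : c00) (i : ℕ) : |x i| ≤ supNorm x := by
  refine le_ciSup (f := fun i => |x i|) ?_ i
  rw [Set.range_comp' abs x]
  exact (x.finite_range.image _).bddAbove

lemma supNorm_proj_le (E : Finset ℕ) (x : c00) : supNorm (proj E x) ≤ supNorm x := by
  refine ciSup_le fun i => ?_
  rw [proj_apply]
  split_ifs
  · exact abs_apply_le_supNorm x i
  · exact abs_zero.trans_le ((abs_nonneg _).trans (abs_apply_le_supNorm x i))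

lemma FLt.disjoint {A B : Finset ℕ} (h : FLt A B) : Disjoint A B :=
  Finset.disjoint_left.2 fun a ha hb => lt_irrefl a (h a ha a hb)

lemma pairwise_disjoint_of_fLt {n : ℕ} {E : Fin n → Finset ℕ}
    (hE : ∀ i j : Fin n, i < j → FLt (E i) (E j)) : Pairwise (Disjoint on E) := by
  intro i j hij
  rcases hij.lt_or_gt with h | h
  · exact (hE i j h).disjoint
  · exact (hE j i h).disjoint.symm

lemma one_lt_flog_two : 1 < flog 2 := by
  rw [flog, Real.lt_logb_iff_rpow_lt (by norm_num) (by norm_num)]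
  norm_num

lemma flog_le_flog {x y : ℝ} (hx : -1 < x) (hxy : x ≤ y) : flog x ≤ flog y :=
  Real.logb_le_logb_of_le (by norm_num) (by linarith) (by linarith)

lemma flog_pos {x : ℝ} (hx : 0 < x) : 0 < flog x :=
  Real.logb_pos (by norm_num) (by linarith)

section Block

variable {y : ℕ → c00}

lemma IsBlockSeq.fLt_support (hy : IsBlockSeq y) {m n : ℕ} (h : m < n) :
    FLt (y m).support (y n).support := by
  induction n, h using Nat.le_induction with
  | base => exact hy.2 m
  | succ n _ ih =>
    intro i hi j hj
    obtain ⟨k, hk⟩ := support_nonempty_iff.2 (hy.1 n)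
    exact (ih i hi k hk).trans (hy.2 n k hk j hj)

lemma IsBlockSeq.pairwise_disjoint (hy : IsBlockSeq y) :
    Pairwise (Disjoint on fun k => (y k).support) := by
  intro m n hmn
  rcases hmn.lt_or_gt with h | h
  · exact (hy.fLt_support h).disjoint
  · exact (hy.fLt_support h).disjoint.symm

lemma IsBlockSeq.fLt_biUnion (hy : IsBlockSeq y) {A B : Finset ℕ} (h : FLt A B) :
    FLt (A.biUnion fun k => (y k).support) (B.biUnion fun k => (y k).support) := by
  intro p hp q hq
  obtain ⟨k, hk, hpk⟩ := Finset.mem_biUnion.1 hp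
  obtain ⟨l, hl, hql⟩ := Finset.mem_biUnion.1 hq
  exact hy.fLt_support (h k hk l hl) p hpk q hql

lemma proj_biUnion_linearCombination (hy : Pairwise (Disjoint on fun k => (y k).support))
    (E : Finset ℕ) (a : c00) :
    proj (E.biUnion fun k => (y k).support) (linearCombination ℝ y a) =
      linearCombination ℝ y (proj E a) := by
  induction a using Finsupp.induction_linear with
  | zero => simp only [map_zero, proj_zero]
  | add a b ha hb => rw [map_add, proj_add, proj_add, map_add, ha, hb]
  | single k t =>
    rw [linearCombination_single, proj_smul]
    by_cases hk : k ∈ E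
    · rw [proj_eq_self (Finset.subset_biUnion_of_mem (fun k => (y k).support) hk), proj, filter_single_of_pos _ hk,
        linearCombination_single]
    · have hdisj : Disjoint (y k).support (E.biUnion fun k => (y k).support) :=
        (Finset.disjoint_biUnion_right _ _ _).2 fun l hl => hy (ne_of_mem_of_not_mem hl hk).symm
      rw [proj_eq_zero hdisj, proj, filter_single_of_neg _ hk, map_zero, smul_zero]

end Block

namespace IsNormC00

variable {N : c00 → ℝ}

lemma apply_zero (hN : IsNormC00 N) : N 0 = 0 :=
  (hN.1 0).2 rfl

lemma nonneg (hN : IsNormC00 N) (x : c00) : 0 ≤ N x := by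
  have h := hN.2.1 x (-x)
  rw [add_neg_cancel, hN.apply_zero, ← neg_one_smul ℝ x, hN.2.2, abs_neg, abs_one, one_mul] at h
  linarith

lemma sum_apply_proj_of_support_subset (hN : IsNormC00 N) {n : ℕ} {E : Fin n → Finset ℕ}
    (hE : Pairwise (Disjoint on E)) {x : c00} {i₀ : Fin n} (h : x.support ⊆ E i₀) :
    ∑ i, N (proj (E i) x) = N x := by
  rw [Finset.sum_eq_single i₀ (fun j _ hj => ?_) (by simp), proj_eq_self h]
  rw [proj_eq_zero ((hE hj).symm.mono_left h), hN.apply_zero]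

end IsNormC00

namespace IsSchlumprechtNorm

variable {N : c00 → ℝ}

lemma supNorm_le (hN : IsSchlumprechtNorm N) (x : c00) : supNorm x ≤ N x :=
  (hN.2 x).1 (Set.mem_insert _ _)

lemma le_of_mem_schSet (hN : IsSchlumprechtNorm N) {x : c00} {s : ℝ} (hs : s ∈ schSet N x) :
    s ≤ N x :=
  (hN.2 x).1 (Set.mem_insert_of_mem _ hs)

lemma le_of_forall_mem_schSet (hN : IsSchlumprechtNorm N) {x : c00} {c : ℝ}
    (hsup : supNorm x ≤ c) (hsch : ∀ s ∈ schSet N x, s ≤ c) : N x ≤ c :=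
  (hN.2 x).2 <| Set.forall_mem_insert.2 ⟨hsup, hsch⟩

lemma proj_le (hN : IsSchlumprechtNorm N) (E : Finset ℕ) (x : c00) : N (proj E x) ≤ N x := by
  refine hN.le_of_forall_mem_schSet ((supNorm_proj_le E x).trans (hN.supNorm_le x)) ?_
  rintro s ⟨n, hn, F, hF, rfl⟩
  refine hN.le_of_mem_schSet ⟨n, hn, fun i => F i ∩ E, fun i j hij p hp q hq => ?_, ?_⟩
  · exact hF i j hij p (Finset.mem_inter.1 hp).1 q (Finset.mem_inter.1 hq).1
  · simp only [proj_proj]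

variable {y : ℕ → c00}

lemma abs_apply_le_linearCombination (hN : IsSchlumprechtNorm N) (hy : IsBlockSeq y)
    (hyn : ∀ n, N (y n) = 1) (a : c00) (i : ℕ) : |a i| ≤ N (linearCombination ℝ y a) := by
  have hproj := proj_biUnion_linearCombination hy.pairwise_disjoint {i} a
  rw [Finset.singleton_biUnion, proj_singleton, linearCombination_single] at hproj
  calc |a i| = N (a i • y i) := by rw [hN.1.2.2, hyn, mul_one]
    _ = N (proj (y i).support (linearCombination ℝ y a)) := by rw [hproj]
    _ ≤ N (linearCombination ℝ y a) := hN.proj_le _ _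

lemma sum_le_of_forall_ssubset (hN : IsSchlumprechtNorm N) (hy : IsBlockSeq y) {a : c00}
    (ih : ∀ b : c00, b.support ⊂ a.support → N b ≤ N (linearCombination ℝ y b))
    {n : ℕ} (hn : 2 ≤ n) {E : Fin n → Finset ℕ} (hE : ∀ i j : Fin n, i < j → FLt (E i) (E j))
    (hsub : ∀ i, ¬ a.support ⊆ E i) :
    (flog n)⁻¹ * ∑ i, N (proj (E i) a) ≤ N (linearCombination ℝ y a) := by
  set F : Fin n → Finset ℕ := fun i => (E i).biUnion fun k => (y k).support
  have hF : ∀ i j : Fin n, i < j → FLt (F i) (F j) := fun i j hij => hy.fLt_biUnion (hE i j hij)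
  calc (flog n)⁻¹ * ∑ i, N (proj (E i) a)
      ≤ (flog n)⁻¹ * ∑ i, N (proj (F i) (linearCombination ℝ y a)) := by
        refine mul_le_mul_of_nonneg_left (Finset.sum_le_sum fun i _ => ?_)
          (inv_nonneg.2 (flog_pos (by positivity)).le)
        rw [proj_biUnion_linearCombination hy.pairwise_disjoint]
        exact ih _ (support_proj_ssubset (hsub i))
    _ ≤ N (linearCombination ℝ y a) := hN.le_of_mem_schSet ⟨n, hn, F, hF, rfl⟩

lemma le_max_of_forall_ssubset (hN : IsSchlumprechtNorm N) (hy : IsBlockSeq y)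
    (hyn : ∀ n, N (y n) = 1) {a : c00}
    (ih : ∀ b : c00, b.support ⊂ a.support → N b ≤ N (linearCombination ℝ y b)) :
    N a ≤ max (N (linearCombination ℝ y a)) ((flog 2)⁻¹ * N a) := by
  refine hN.le_of_forall_mem_schSet
    (le_max_of_le_left (ciSup_le (hN.abs_apply_le_linearCombination hy hyn a))) ?_
  rintro s ⟨n, hn, E, hE, rfl⟩
  by_cases hcover : ∃ i₀, a.support ⊆ E i₀
  · obtain ⟨i₀, hi₀⟩ := hcover
    rw [hN.1.sum_apply_proj_of_support_subset (pairwise_disjoint_of_fLt hE) hi₀]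
    refine le_max_of_le_right (mul_le_mul_of_nonneg_right ?_ (hN.1.nonneg a))
    exact inv_anti₀ (flog_pos two_pos) (flog_le_flog (by norm_num) (by exact_mod_cast hn))
  · exact le_max_of_le_left (hN.sum_le_of_forall_ssubset hy ih hn hE (not_exists.1 hcover))

theorem le_linearCombination_of_isBlockSeq (hN : IsSchlumprechtNorm N) (hy : IsBlockSeq y)
    (hyn : ∀ n, N (y n) = 1) (a : c00) : N a ≤ N (linearCombination ℝ y a) := by
  induction hs : a.support using Finset.strongInduction generalizing a with
  | H s ih =>
    subst hs
    rcases le_max_iff.1 (hN.le_max_of_forall_ssubset hy hyn fun b hb => ih _ hb b rfl) with h | h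
    · exact h
    · have hinv : (flog 2)⁻¹ < 1 := inv_lt_one_of_one_lt₀ one_lt_flog_two
      nlinarith [hN.1.nonneg a, hN.1.nonneg (linearCombination ℝ y a)]

end IsSchlumprechtNorm

/-- every normalized block sequence of `(e_i)` 1-dominates `(e_n)`. -/
theorem normalized_block_dominates_basis
    (N : c00 → ℝ) (hN : IsSchlumprechtNorm N)
    (y : ℕ → c00) (hy : IsBlockSeq y) (hyn : ∀ n, N (y n) = 1)
    (a : ℕ →₀ ℝ) :
    N (a.sum fun i t => t • Finsupp.single i (1 : ℝ)) ≤
      N (a.sum fun i t => t • y i) := by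
  have hbasis : (a.sum fun i t => t • Finsupp.single i (1 : ℝ)) = a := by
    simp only [smul_single_one, sum_single]
  rw [hbasis, ← linearCombination_apply]
  exact hN.le_linearCombination_of_isBlockSeq hy hyn a
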